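/- A net of quadrics Λ in the variables a,b,c,d,e is ρ2-unstable, where ρ2=(2,2,2,-3,-3), if and only if at least one of the following holds: (a) Λ ⊆ (d,e) (every element of the net vanishes on the plane d=e=0); or (b) dim(Λ ∩ (d,e)) ≥ 2 and Λ ∩ span{d²,de,e²} ≠ 0 (a pencil of Λ contains the plane d=e=0, and an element of that pencil is singular along this plane). -/

import Mathlib

open MvPolynomial

/-- The space of polynomials in the five variables `a,b,c,d,e` (indexed `0,…,4`). -/
abbrev Quin : Type := MvPolynomial (Fin 5) ℂ

/-- `m` is (the exponent vector of) a quadratic monomial. -/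
def QuadMon (m : Fin 5 →₀ ℕ) : Prop := (m.sum fun _ n => n) = 2

/-- A net of quadrics: a 3-dimensional space of quadratic forms. -/
def IsNet (Λ : Submodule ℂ Quin) : Prop :=
  Module.finrank ℂ Λ = 3 ∧ ∀ Q ∈ Λ, MvPolynomial.IsHomogeneous Q 2

/-- The `ρ`-weight of a monomial. -/
def wt (ρ : Fin 5 → ℤ) (m : Fin 5 →₀ ℕ) : ℤ := ∑ i, (m i : ℤ) * ρ i

/-- `Λ` is semistable with respect to the weight vector `ρ`: there are three distinct
quadratic monomials with total `ρ`-weight `≥ 0` such that the corresponding coefficient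
map `Λ → ℂ³` is bijective. -/
def SemistableWrt (Λ : Submodule ℂ Quin) (ρ : Fin 5 → ℤ) : Prop :=
  ∃ m1 m2 m3 : Fin 5 →₀ ℕ, m1 ≠ m2 ∧ m1 ≠ m3 ∧ m2 ≠ m3 ∧
    QuadMon m1 ∧ QuadMon m2 ∧ QuadMon m3 ∧
    0 ≤ wt ρ m1 + wt ρ m2 + wt ρ m3 ∧
    Function.Bijective (fun Q : Λ =>
      (![MvPolynomial.coeff m1 (Q : Quin), MvPolynomial.coeff m2 (Q : Quin),
         MvPolynomial.coeff m3 (Q : Quin)] : Fin 3 → ℂ))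

/-- The twelve distinguished weight vectors `ρ1,…,ρ12`. -/
def rho : Fin 12 → Fin 5 → ℤ :=
  ![![1,1,1,1,-4], ![2,2,2,-3,-3], ![3,3,-2,-2,-2], ![4,-1,-1,-1,-1],
    ![3,3,3,-2,-7], ![4,4,-1,-1,-6], ![9,4,-1,-6,-6], ![7,2,2,-3,-8],
    ![12,7,2,-8,-13], ![9,4,-1,-1,-11], ![14,4,-1,-6,-11], ![13,8,3,-7,-17]]

/-- A normalized weight vector: nonincreasing, sums to zero and not identically zero. -/
def IsNormalized (ρ : Fin 5 → ℤ) : Prop :=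
  (∀ i j : Fin 5, i ≤ j → ρ j ≤ ρ i) ∧ (∑ i, ρ i) = 0 ∧ ρ ≠ 0

/-- Linear substitution of variables by the matrix `g`, as a linear map on polynomials. -/
noncomputable def substMap (g : Matrix (Fin 5) (Fin 5) ℂ) : Quin →ₗ[ℂ] Quin :=
  (MvPolynomial.aeval fun i => ∑ j, MvPolynomial.C (g i j) * MvPolynomial.X j).toLinearMap

/-- Semistability of a net (Hilbert–Mumford criterion for `SL(5)`). -/
def Semistable (Λ : Submodule ℂ Quin) : Prop :=
  ∀ (g : Matrix.GeneralLinearGroup (Fin 5) ℂ) (ρ : Fin 5 → ℤ), IsNormalized ρ →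
    SemistableWrt (Submodule.map (substMap (g : Matrix (Fin 5) (Fin 5) ℂ)) Λ) ρ

/-- The symmetric matrix of a quadratic form. -/
noncomputable def quadMatrix (Q : Quin) : Matrix (Fin 5) (Fin 5) ℂ :=
  Matrix.of fun i j =>
    if i = j then MvPolynomial.coeff (Finsupp.single i 2) Q
    else (1/2) * MvPolynomial.coeff (Finsupp.single i 1 + Finsupp.single j 1) Q

/-- The discriminant quintic `det (x·A1 + y·A2 + z·A3)` of a net with basis `Q1,Q2,Q3`. -/
noncomputable def netDisc (Q1 Q2 Q3 : Quin) : MvPolynomial (Fin 3) ℂ :=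
  Matrix.det (Matrix.of fun i j : Fin 5 =>
    MvPolynomial.C (quadMatrix Q1 i j) * MvPolynomial.X 0 +
    MvPolynomial.C (quadMatrix Q2 i j) * MvPolynomial.X 1 +
    MvPolynomial.C (quadMatrix Q3 i j) * MvPolynomial.X 2)

/-- The net lies on a smooth quartic del Pezzo surface. -/
def OnSmoothDelPezzo (Λ : Submodule ℂ Quin) : Prop :=
  ∃ P1 P2 : Quin, P1 ∈ Λ ∧ P2 ∈ Λ ∧ LinearIndependent ℂ ![P1, P2] ∧
    ∀ v : Fin 5 → ℂ, v ≠ 0 → MvPolynomial.eval v P1 = 0 → MvPolynomial.eval v P2 = 0 →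
      LinearIndependent ℂ
        ![fun i => MvPolynomial.eval v (MvPolynomial.pderiv i P1),
          fun i => MvPolynomial.eval v (MvPolynomial.pderiv i P2)]

/-- The span of the quadratic monomials whose exponent vectors satisfy `P`. -/
noncomputable def monSpan (P : (Fin 5 →₀ ℕ) → Prop) : Submodule ℂ Quin :=
  Submodule.span ℂ {Q : Quin | ∃ m : Fin 5 →₀ ℕ, QuadMon m ∧ P m ∧ Q = MvPolynomial.monomial m 1}

/-- `(d,e)`: span of the quadratic monomials divisible by `d` or `e`. -/
noncomputable def idealDE : Submodule ℂ Quin := monSpan fun m => m 3 ≠ 0 ∨ m 4 ≠ 0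

/-- `(d,e)² = span{d², de, e²}`. -/
noncomputable def sqDE : Submodule ℂ Quin := monSpan fun m => m 0 = 0 ∧ m 1 = 0 ∧ m 2 = 0

/-!
A quadratic monomial of `(d,e)`-degree `k` has `ρ₂`-weight `4 - 5k`, so `Λ` is `ρ₂`-semistable
iff the coefficient functionals of three monomials of total `(d,e)`-degree `≤ 2` form a basis of
`Λ*`. Put `A = Λ ∩ (d,e)` and `B = Λ ∩ (d,e)²`. Coefficients of monomials of `(d,e)`-degree `0`
vanish on `A` and those of degree `≤ 1` vanish on `B`, so any such basis has total degree at least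
`dim A + dim B`; choosing the functionals greedily, lowest degree first, attains this bound.
Hence `Λ` is `ρ₂`-unstable iff `dim A + dim B ≥ 3`, which for `B ⊆ A ⊆ Λ` and `dim Λ = 3` is the
stated dichotomy.
-/

open Module LinearMap

section LinearAlgebra

variable {K V : Type*} [Field K] [AddCommGroup V] [Module K V]

theorem finrank_inf_ker_add_one {U : Submodule K V} [FiniteDimensional K U] {f : Dual K V}
    {u : V} (hu : u ∈ U) (hfu : f u ≠ 0) :
    finrank K ↥(U ⊓ ker f) + 1 = finrank K U := by
  have hf : f.domRestrict U ≠ 0 := fun h => hfu (by simpa using LinearMap.congr_fun h ⟨u, hu⟩)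
  rw [← Dual.finrank_ker_add_one_of_ne_zero hf, ker_domRestrict, ← Submodule.map_comap_subtype,
    Submodule.finrank_map_subtype_eq]

theorem finrank_inf_add_ite_le {U' U : Submodule K V} [FiniteDimensional K U] (hle : U' ≤ U)
    (hU' : finrank K U' + 1 = finrank K U) (P : Submodule K V) [Decidable (U ≤ P)] :
    finrank K ↥(U' ⊓ P) + (if U ≤ P then 1 else 0) ≤ finrank K ↥(U ⊓ P) := by
  have : FiniteDimensional K U' := Submodule.finiteDimensional_of_le hle
  split_ifs with hUP
  · rw [inf_eq_left.mpr hUP]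
    have := Submodule.finrank_mono (inf_le_left : U' ⊓ P ≤ U')
    omega
  · have : FiniteDimensional K ↥(U ⊓ P) := Submodule.finiteDimensional_inf_left U P
    simpa using Submodule.finrank_mono (inf_le_inf_right P hle)

theorem finrank_le_card_of_disjoint_ker {ι : Type*} {f : V →ₗ[K] ι → K} {W : Submodule K V}
    (hW : Disjoint W (ker f)) (s : Finset ι) (hs : ∀ w ∈ W, ∀ i ∉ s, f w i = 0) :
    finrank K W ≤ s.card := by
  let g : W →ₗ[K] s → K := (LinearMap.pi fun i : s => LinearMap.proj (R := K) (i : ι)) ∘ₗ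
    f.domRestrict W
  have hg : Function.Injective g := by
    rw [← ker_eq_bot, Submodule.eq_bot_iff]
    intro w hw
    have hfw : f w = 0 := funext fun i => by
      by_cases hi : i ∈ s
      · exact congrFun hw ⟨i, hi⟩
      · exact hs w w.2 i hi
    exact Subtype.ext ((disjoint_ker.mp hW) w w.2 hfw)
  simpa using finrank_le_finrank_of_injective hg

end LinearAlgebra

def degDE (m : Fin 5 →₀ ℕ) : ℕ := m 3 + m 4

theorem quadMon_iff {m : Fin 5 →₀ ℕ} : QuadMon m ↔ m 0 + m 1 + m 2 + degDE m = 2 := by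
  rw [QuadMon, Finsupp.sum_fintype _ _ fun _ => rfl, Fin.sum_univ_five, degDE, ← add_assoc]

theorem monSpan_eq_restrictSupport (P : (Fin 5 →₀ ℕ) → Prop) :
    monSpan P = restrictSupport ℂ {m | QuadMon m ∧ P m} := by
  rw [monSpan, restrictSupport_eq_span]
  congr 1
  ext Q
  simp [eq_comm, and_assoc]

theorem mem_monSpan {P : (Fin 5 →₀ ℕ) → Prop} {Q : Quin} :
    Q ∈ monSpan P ↔ ∀ m, coeff m Q ≠ 0 → QuadMon m ∧ P m := by
  rw [monSpan_eq_restrictSupport, mem_restrictSupport_iff]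
  exact ⟨fun h m hm => h (mem_support_iff.mpr hm), fun h m hm => h m (mem_support_iff.mp hm)⟩

theorem quadMon_of_coeff_ne_zero {Q : Quin} (hQ : Q.IsHomogeneous 2) {m : Fin 5 →₀ ℕ}
    (hm : coeff m Q ≠ 0) : QuadMon m := by
  simpa [QuadMon, Finsupp.weight_apply] using hQ hm

theorem mem_idealDE_iff {Q : Quin} (hQ : Q.IsHomogeneous 2) :
    Q ∈ idealDE ↔ ∀ m, coeff m Q ≠ 0 → 1 ≤ degDE m := by
  rw [idealDE, mem_monSpan]
  refine forall₂_congr fun m hm => ?_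
  simp only [quadMon_of_coeff_ne_zero hQ hm, true_and, degDE]
  omega

theorem mem_sqDE_iff {Q : Quin} (hQ : Q.IsHomogeneous 2) :
    Q ∈ sqDE ↔ ∀ m, coeff m Q ≠ 0 → 2 ≤ degDE m := by
  rw [sqDE, mem_monSpan]
  refine forall₂_congr fun m hm => ?_
  have := quadMon_iff.mp (quadMon_of_coeff_ne_zero hQ hm)
  simp only [quadMon_of_coeff_ne_zero hQ hm, true_and]
  omega

theorem sqDE_le_idealDE : sqDE ≤ idealDE := by
  rw [sqDE, idealDE, monSpan_eq_restrictSupport, monSpan_eq_restrictSupport]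
  refine restrictSupport_mono _ fun m ⟨hquad, h0, h1, h2⟩ => ⟨hquad, ?_⟩
  have := quadMon_iff.mp hquad
  simp only [degDE] at this
  omega

section CoeffVec

variable {ι : Type*}

noncomputable def coeffVec (ms : ι → Fin 5 →₀ ℕ) : Quin →ₗ[ℂ] ι → ℂ :=
  LinearMap.pi fun i => lcoeff ℂ (ms i)

@[simp]
theorem coeffVec_apply (ms : ι → Fin 5 →₀ ℕ) (Q : Quin) (i : ι) :
    coeffVec ms Q i = coeff (ms i) Q := rfl

theorem injective_of_surjective_domRestrict_coeffVec [DecidableEq ι] {Λ : Submodule ℂ Quin}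
    {ms : ι → Fin 5 →₀ ℕ} (h : Function.Surjective ((coeffVec ms).domRestrict Λ)) :
    Function.Injective ms := by
  intro i j hij
  by_contra hne
  obtain ⟨Q, hQ⟩ := h (Pi.single i 1)
  have hi := congrFun hQ i
  have hj := congrFun hQ j
  simp only [domRestrict_apply, coeffVec_apply, hij, Pi.single_eq_same] at hi hj
  simp [Pi.single_eq_of_ne' hne, hi] at hj

theorem bijective_domRestrict_coeffVec_iff [Fintype ι] {Λ : Submodule ℂ Quin}
    [FiniteDimensional ℂ Λ] (hΛ : finrank ℂ Λ = Fintype.card ι) (ms : ι → Fin 5 →₀ ℕ) :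
    Function.Bijective ((coeffVec ms).domRestrict Λ) ↔ Disjoint Λ (ker (coeffVec ms)) := by
  rw [Function.Bijective, ← injective_iff_surjective_of_finrank_eq_finrank (by simpa using hΛ),
    and_self, injective_domRestrict_iff, disjoint_iff]

end CoeffVec

theorem semistableWrt_iff {Λ : Submodule ℂ Quin} [FiniteDimensional ℂ Λ]
    (hΛ : finrank ℂ Λ = 3) (ρ : Fin 5 → ℤ) :
    SemistableWrt Λ ρ ↔ ∃ ms : Fin 3 → Fin 5 →₀ ℕ, (∀ i, QuadMon (ms i)) ∧
      0 ≤ ∑ i, wt ρ (ms i) ∧ Disjoint Λ (ker (coeffVec ms)) := by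
  have hvec (m1 m2 m3 : Fin 5 →₀ ℕ) : (fun Q : Λ => (![coeff m1 (Q : Quin), coeff m2 (Q : Quin),
      coeff m3 (Q : Quin)] : Fin 3 → ℂ)) = (coeffVec ![m1, m2, m3]).domRestrict Λ := by
    ext Q i
    fin_cases i <;> rfl
  have hbij := bijective_domRestrict_coeffVec_iff (ι := Fin 3) (Λ := Λ) (by simpa using hΛ)
  constructor
  · rintro ⟨m1, m2, m3, -, -, -, h1, h2, h3, hwt, hQ⟩
    refine ⟨![m1, m2, m3], fun i => by fin_cases i <;> assumption, by simpa [Fin.sum_univ_three],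
      (hbij _).mp (hvec m1 m2 m3 ▸ hQ)⟩
  · rintro ⟨ms, hquad, hwt, hdisj⟩
    obtain ⟨m1, m2, m3, rfl⟩ : ∃ m1 m2 m3, ms = ![m1, m2, m3] :=
      ⟨ms 0, ms 1, ms 2, by ext1 i; fin_cases i <;> rfl⟩
    have hQ := (hbij _).mpr hdisj
    have hinj := injective_of_surjective_domRestrict_coeffVec hQ.2
    refine ⟨m1, m2, m3, hinj.ne (by decide : (0 : Fin 3) ≠ 1),
      hinj.ne (by decide : (0 : Fin 3) ≠ 2), hinj.ne (by decide : (1 : Fin 3) ≠ 2),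
      hquad 0, hquad 1, hquad 2,
      by simpa [Fin.sum_univ_three] using hwt, hvec m1 m2 m3 ▸ hQ⟩

theorem wt_rho_one {m : Fin 5 →₀ ℕ} (hm : QuadMon m) : wt (rho 1) m = 4 - 5 * degDE m := by
  have := quadMon_iff.mp hm
  simp [wt, rho, degDE, Fin.sum_univ_five] at this ⊢
  omega

theorem sum_wt_rho_one {n : ℕ} {ms : Fin n → Fin 5 →₀ ℕ} (hms : ∀ i, QuadMon (ms i)) :
    ∑ i, wt (rho 1) (ms i) = 4 * n - 5 * ∑ i, degDE (ms i) := by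
  simp [wt_rho_one (hms _), Finset.sum_sub_distrib, Finset.mul_sum, mul_comm]

open Finset in
theorem finrank_inf_le_card_degDE {Λ : Submodule ℂ Quin} {ι : Type*} [Fintype ι]
    {ms : ι → Fin 5 →₀ ℕ} (hdisj : Disjoint Λ (ker (coeffVec ms))) {W : Submodule ℂ Quin}
    (hW : W ≤ Λ) (k : ℕ)
    (hvanish : ∀ Q ∈ W, ∀ m, coeff m Q ≠ 0 → k ≤ degDE m) :
    finrank ℂ W ≤ #{i | k ≤ degDE (ms i)} :=
  finrank_le_card_of_disjoint_ker (hdisj.mono_left hW) _ fun Q hQ i hi => by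
    by_contra h
    exact hi (Finset.mem_filter.mpr ⟨Finset.mem_univ i, hvanish Q hQ (ms i) h⟩)

theorem finrank_inf_idealDE_add_finrank_inf_sqDE_le {Λ : Submodule ℂ Quin} {ι : Type*}
    [Fintype ι] (hhom : ∀ Q ∈ Λ, Q.IsHomogeneous 2) {ms : ι → Fin 5 →₀ ℕ}
    (hdisj : Disjoint Λ (ker (coeffVec ms))) :
    finrank ℂ ↥(Λ ⊓ idealDE) + finrank ℂ ↥(Λ ⊓ sqDE) ≤ ∑ i, degDE (ms i) := by
  have hA := finrank_inf_le_card_degDE hdisj inf_le_left 1 fun Q hQ =>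
    (mem_idealDE_iff (hhom Q hQ.1)).mp hQ.2
  have hB := finrank_inf_le_card_degDE hdisj inf_le_left 2 fun Q hQ =>
    (mem_sqDE_iff (hhom Q hQ.1)).mp hQ.2
  refine (add_le_add hA hB).trans ?_
  rw [Finset.card_filter, Finset.card_filter, ← Finset.sum_add_distrib]
  refine Finset.sum_le_sum fun i _ => ?_
  split_ifs <;> omega

theorem exists_coeff_ne_zero_degDE_le {U : Submodule ℂ Quin} [Decidable (U ≤ idealDE)]
    [Decidable (U ≤ sqDE)] (hhom : ∀ Q ∈ U, Q.IsHomogeneous 2) (hU : U ≠ ⊥) :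
    ∃ Q ∈ U, ∃ m, coeff m Q ≠ 0 ∧ QuadMon m ∧
      degDE m ≤ (if U ≤ idealDE then 1 else 0) + (if U ≤ sqDE then 1 else 0) := by
  by_cases hA : U ≤ idealDE
  · by_cases hB : U ≤ sqDE
    · obtain ⟨Q, hQ, hQ0⟩ := Submodule.exists_mem_ne_zero_of_ne_bot hU
      obtain ⟨m, hm⟩ := ne_zero_iff.mp hQ0
      have hquad := quadMon_of_coeff_ne_zero (hhom Q hQ) hm
      have := quadMon_iff.mp hquad
      exact ⟨Q, hQ, m, hm, hquad, by simp only [hA, hB, if_true]; omega⟩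
    · obtain ⟨Q, hQ, hQB⟩ := SetLike.not_le_iff_exists.mp hB
      obtain ⟨m, hm, hdeg⟩ : ∃ m, coeff m Q ≠ 0 ∧ degDE m < 2 := by
        simpa [mem_sqDE_iff (hhom Q hQ)] using hQB
      exact ⟨Q, hQ, m, hm, quadMon_of_coeff_ne_zero (hhom Q hQ) hm,
        by simp only [hA, hB, if_true, if_false]; omega⟩
  · obtain ⟨Q, hQ, hQA⟩ := SetLike.not_le_iff_exists.mp hA
    obtain ⟨m, hm, hdeg⟩ : ∃ m, coeff m Q ≠ 0 ∧ degDE m < 1 := by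
      simpa [mem_idealDE_iff (hhom Q hQ)] using hQA
    exact ⟨Q, hQ, m, hm, quadMon_of_coeff_ne_zero (hhom Q hQ) hm, by omega⟩

theorem exists_quadMon_disjoint_ker_coeffVec (n : ℕ) (U : Submodule ℂ Quin)
    [FiniteDimensional ℂ U] (hU : finrank ℂ U = n) (hhom : ∀ Q ∈ U, Q.IsHomogeneous 2) :
    ∃ ms : Fin n → Fin 5 →₀ ℕ, (∀ i, QuadMon (ms i)) ∧ Disjoint U (ker (coeffVec ms)) ∧
      ∑ i, degDE (ms i) ≤ finrank ℂ ↥(U ⊓ idealDE) + finrank ℂ ↥(U ⊓ sqDE) := by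
  classical
  induction n generalizing U with
  | zero =>
    rw [Submodule.finrank_eq_zero] at hU
    refine ⟨Fin.elim0, Fin.rec0, hU ▸ disjoint_bot_left, ?_⟩
    rw [Finset.univ_eq_empty, Finset.sum_empty]
    exact Nat.zero_le _
  | succ n ih =>
    have hU0 : U ≠ ⊥ := by rw [Ne, ← Submodule.finrank_eq_zero]; omega
    obtain ⟨Q, hQ, m, hQm, hm, hdeg⟩ := exists_coeff_ne_zero_degDE_le hhom hU0
    have hU' := finrank_inf_ker_add_one (f := lcoeff ℂ m) hQ hQm
    obtain ⟨ms, hms, hdisj, hsum⟩ :=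
      ih (U ⊓ ker (lcoeff ℂ m)) (Nat.add_right_cancel (hU'.trans hU)) fun Q hQ => hhom Q hQ.1
    refine ⟨Fin.cons m ms, Fin.cases hm hms, disjoint_ker.mpr fun P hP hP0 => ?_, ?_⟩
    · exact disjoint_ker.mp hdisj P ⟨hP, congrFun hP0 0⟩ (funext fun i => congrFun hP0 i.succ)
    · have hA := finrank_inf_add_ite_le inf_le_left hU' idealDE
      have hB := finrank_inf_add_ite_le inf_le_left hU' sqDE
      simp only [Fin.sum_univ_succ, Fin.cons_zero, Fin.cons_succ]
      linarith

theorem semistableWrt_rho_one_iff {Λ : Submodule ℂ Quin} (hΛ : IsNet Λ) :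
    SemistableWrt Λ (rho 1) ↔ finrank ℂ ↥(Λ ⊓ idealDE) + finrank ℂ ↥(Λ ⊓ sqDE) ≤ 2 := by
  obtain ⟨h3, hhom⟩ := hΛ
  have : FiniteDimensional ℂ Λ := Module.finite_of_finrank_eq_succ h3
  rw [semistableWrt_iff h3]
  constructor
  · rintro ⟨ms, hms, hwt, hdisj⟩
    have := finrank_inf_idealDE_add_finrank_inf_sqDE_le hhom hdisj
    rw [sum_wt_rho_one hms] at hwt
    omega
  · intro hle
    obtain ⟨ms, hms, hdisj, hsum⟩ := exists_quadMon_disjoint_ker_coeffVec 3 Λ h3 hhom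
    refine ⟨ms, hms, ?_, hdisj⟩
    rw [sum_wt_rho_one hms]
    omega

/-- Characterization of `ρ2`-unstable nets, `ρ2 = (2,2,2,-3,-3)`:
either the net contains the plane `d = e = 0`, or a pencil of the net contains this plane
and an element of that pencil is singular along it. -/
theorem rho2_unstable_iff (Λ : Submodule ℂ Quin) (hΛ : IsNet Λ) :
    ¬ SemistableWrt Λ (rho 1) ↔
      (Λ ≤ idealDE ∨
        (2 ≤ Module.finrank ℂ ↥(Λ ⊓ idealDE) ∧ Λ ⊓ sqDE ≠ ⊥)) := by
  have : FiniteDimensional ℂ Λ := Module.finite_of_finrank_eq_succ hΛ.1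
  have hA : Λ ≤ idealDE ↔ finrank ℂ ↥(Λ ⊓ idealDE) = 3 := by
    rw [← inf_eq_left, ← hΛ.1]
    exact ⟨fun h => by rw [h], Submodule.eq_of_le_of_finrank_eq inf_le_left⟩
  have hB : Λ ⊓ sqDE ≠ ⊥ ↔ 0 < finrank ℂ ↥(Λ ⊓ sqDE) := by
    rw [Ne, ← Submodule.finrank_eq_zero]
    omega
  have hBA := Submodule.finrank_mono (inf_le_inf_left Λ sqDE_le_idealDE)
  have hAΛ : finrank ℂ ↥(Λ ⊓ idealDE) ≤ 3 := hΛ.1 ▸ Submodule.finrank_mono inf_le_left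
  rw [semistableWrt_rho_one_iff hΛ, hA, hB]
  omega
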